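/- arXiv:1806.08844 — 7 statements merged into one kernel-verified Lean document; each statement's English description precedes it below -/
import Mathlib

section
/- The closures of Ω⁻ and Ω⁺ cover the whole space: closure(Ω⁻) ∪ closure(Ω⁺) = ℝⁿ. -/
open scoped RealInnerProductSpace

/-- The closures of `Ω⁻` and `Ω⁺` cover the whole space. -/
theorem omega_closures_cover {n : ℕ} (hn : 1 ≤ n)
    (fm fp : EuclideanSpace ℝ (Fin n) → EuclideanSpace ℝ (Fin n))
    (hfm : ContDiff ℝ 1 fm) (hfp : ContDiff ℝ 1 fp)
    (x₀ : EuclideanSpace ℝ (Fin n)) (lam : ℝ) (hlam : lam ∈ Set.Icc (0 : ℝ) 1)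
    (heq : lam • fm x₀ + (1 - lam) • fp x₀ = 0)
    (V : EuclideanSpace ℝ (Fin n) → ℝ) (hV : ContDiff ℝ 1 V)
    (hV₀ : V x₀ = 0) (hVpos : ∀ x, x ≠ x₀ → 0 < V x)
    (hdec : ∀ x, x ≠ x₀ → fderiv ℝ V x (lam • fm x + (1 - lam) • fp x) < 0) :
    closure {x | fderiv ℝ V x (fm x) < 0} ∪ closure {x | fderiv ℝ V x (fp x) < 0}
      = Set.univ := by
  haveI : Nonempty (Fin n) := ⟨⟨0, hn⟩⟩
  have hsub : {x : EuclideanSpace ℝ (Fin n) | x ≠ x₀} ⊆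
      {x | fderiv ℝ V x (fm x) < 0} ∪ {x | fderiv ℝ V x (fp x) < 0} := by
    intro x hx
    have h := hdec x hx
    rw [map_add, map_smul, map_smul] at h
    by_contra hc
    simp only [Set.mem_union, Set.mem_setOf_eq, not_or, not_lt] at hc
    obtain ⟨h1, h2⟩ := hc
    have : (0 : ℝ) ≤ lam • fderiv ℝ V x (fm x) + (1 - lam) • fderiv ℝ V x (fp x) := by
      have := mul_nonneg hlam.1 h1
      have := mul_nonneg (by linarith [hlam.2] : (0:ℝ) ≤ 1 - lam) h2
      simp only [smul_eq_mul]
      linarith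
    linarith
  have hdense : Dense {x : EuclideanSpace ℝ (Fin n) | x ≠ x₀} :=
    dense_compl_singleton x₀
  have : (Set.univ : Set (EuclideanSpace ℝ (Fin n))) ⊆
      closure ({x | fderiv ℝ V x (fm x) < 0} ∪ {x | fderiv ℝ V x (fp x) < 0}) := by
    intro x _
    exact closure_mono hsub (hdense x)
  rw [closure_union] at this
  exact Set.eq_univ_of_univ_subset this
end

section
/- The topological boundary of each region, with x₀ removed, is contained in the other region: ∂Ω⁻ \ {x₀} ⊂ Ω⁺ and ∂Ω⁺ \ {x₀} ⊂ Ω⁻. -/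
open scoped RealInnerProductSpace

private lemma aux_frontier {n : ℕ}
    (x₀ : EuclideanSpace ℝ (Fin n)) (lam : ℝ) (hlam1 : lam ≤ 1)
    (gm gp : EuclideanSpace ℝ (Fin n) → ℝ)
    (hgm : Continuous gm)
    (hdec : ∀ x, x ≠ x₀ → lam * gm x + (1 - lam) * gp x < 0) :
    frontier {x | gm x < 0} \ {x₀} ⊆ {x | gp x < 0} := by
  rintro x ⟨hxf, hx0⟩
  have hx0' : x ≠ x₀ := hx0
  have hopen : IsOpen {x | gm x < 0} := isOpen_lt hgm continuous_const
  have hle : gm x ≤ 0 := by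
    have hcl : x ∈ closure {x | gm x < 0} := hxf.1
    have hsub : closure {x | gm x < 0} ⊆ {x | gm x ≤ 0} :=
      closure_minimal (fun y (hy : gm y < 0) => le_of_lt hy) (isClosed_le hgm continuous_const)
    exact hsub hcl
  have hnot : ¬ gm x < 0 := by
    have := hxf.2
    rwa [hopen.interior_eq] at this
  have hgm0 : gm x = 0 := le_antisymm hle (not_lt.mp hnot)
  have h := hdec x hx0'
  rw [hgm0] at h
  by_contra hge
  nlinarith [mul_nonneg (sub_nonneg.2 hlam1) (not_lt.mp hge)]

/-- The topological boundary of each region, with `x₀` removed, is contained in the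
other region: `∂Ω⁻ \ {x₀} ⊆ Ω⁺` and `∂Ω⁺ \ {x₀} ⊆ Ω⁻`. -/
theorem omega_frontier_subset {n : ℕ} (hn : 1 ≤ n)
    (fm fp : EuclideanSpace ℝ (Fin n) → EuclideanSpace ℝ (Fin n))
    (hfm : ContDiff ℝ 1 fm) (hfp : ContDiff ℝ 1 fp)
    (x₀ : EuclideanSpace ℝ (Fin n)) (lam : ℝ) (hlam : lam ∈ Set.Icc (0 : ℝ) 1)
    (heq : lam • fm x₀ + (1 - lam) • fp x₀ = 0)
    (V : EuclideanSpace ℝ (Fin n) → ℝ) (hV : ContDiff ℝ 1 V)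
    (hV₀ : V x₀ = 0) (hVpos : ∀ x, x ≠ x₀ → 0 < V x)
    (hdec : ∀ x, x ≠ x₀ → fderiv ℝ V x (lam • fm x + (1 - lam) • fp x) < 0) :
    frontier {x | fderiv ℝ V x (fm x) < 0} \ {x₀} ⊆ {x | fderiv ℝ V x (fp x) < 0} ∧
    frontier {x | fderiv ℝ V x (fp x) < 0} \ {x₀} ⊆ {x | fderiv ℝ V x (fm x) < 0} := by
  have hdV : Continuous (fderiv ℝ V) := hV.continuous_fderiv one_ne_zero
  have hgm : Continuous fun x => fderiv ℝ V x (fm x) := hdV.clm_apply hfm.continuous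
  have hgp : Continuous fun x => fderiv ℝ V x (fp x) := hdV.clm_apply hfp.continuous
  have hdec' : ∀ x, x ≠ x₀ →
      lam * fderiv ℝ V x (fm x) + (1 - lam) * fderiv ℝ V x (fp x) < 0 := by
    intro x hx
    have h := hdec x hx
    simpa [map_add, map_smul, smul_eq_mul] using h
  have hdec'' : ∀ x, x ≠ x₀ →
      (1 - lam) * fderiv ℝ V x (fp x) + (1 - (1 - lam)) * fderiv ℝ V x (fm x) < 0 := by
    intro x hx
    have := hdec' x hx
    ring_nf
    ring_nf at this
    linarith
  constructor
  · exact aux_frontier x₀ lam hlam.2 _ _ hgm hdec'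
  · exact aux_frontier x₀ (1 - lam) (by linarith [hlam.1]) _ _ hgp hdec''
end

section
/- Assume x₀ is a switched equilibrium with some λ₀ ∈ [0,1), i.e. λ₀ f⁻(x₀) + (1−λ₀) f⁺(x₀) = 0. Then for every x ∈ ℝⁿ with ⟨x−x₀, P f⁻(x₀)⟩ ≥ 0 one has the Lyapunov decay estimate V′(x) f⁺(x) ≤ −α‖x−x₀‖²; in particular V′(x) f⁺(x) < 0 for every such x ≠ x₀. -/
open scoped RealInnerProductSpace

/-- If `x₀` is a switched equilibrium with `λ₀ ∈ [0,1)`, then for every `x` with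
`⟨x-x₀, P f⁻(x₀)⟩ ≥ 0` one has `V′(x) f⁺(x) ≤ -α‖x-x₀‖²`; in particular
`V′(x) f⁺(x) < 0` for every such `x ≠ x₀`. -/
theorem decay_estimate_plus {n : ℕ} (hn : 1 ≤ n)
    (fm fp : EuclideanSpace ℝ (Fin n) → EuclideanSpace ℝ (Fin n))
    (hfm : ContDiff ℝ 1 fm) (hfp : ContDiff ℝ 1 fp)
    (x₀ : EuclideanSpace ℝ (Fin n))
    (P : Matrix (Fin n) (Fin n) ℝ) (hP : P.IsSymm)
    (α : ℝ) (hα : 0 < α)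
    (hp : ∀ x, 2 * ⟪x - x₀, Matrix.toEuclideanLin P (fp x - fp x₀)⟫ ≤ -α * ‖x - x₀‖ ^ 2)
    (lam : ℝ) (hlam : lam ∈ Set.Ico (0 : ℝ) 1)
    (heq : lam • fm x₀ + (1 - lam) • fp x₀ = 0) :
    ∀ x, 0 ≤ ⟪x - x₀, Matrix.toEuclideanLin P (fm x₀)⟫ →
      2 * ⟪x - x₀, Matrix.toEuclideanLin P (fp x)⟫ ≤ -α * ‖x - x₀‖ ^ 2 ∧
      (x ≠ x₀ → 2 * ⟪x - x₀, Matrix.toEuclideanLin P (fp x)⟫ < 0) := by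
  intro x hx
  obtain ⟨hl0, hl1⟩ := hlam
  have h1 : (1 : ℝ) - lam > 0 := by linarith
  have hfp0 : fp x₀ = (-(lam / (1 - lam))) • fm x₀ := by
    have : (1 - lam) • fp x₀ = -(lam • fm x₀) := by
      rw [eq_neg_iff_add_eq_zero, add_comm]; exact heq
    have h2 := congrArg (fun v => ((1 - lam)⁻¹ : ℝ) • v) this
    simp only [smul_smul, inv_mul_cancel₀ h1.ne', one_smul, smul_neg] at h2
    rw [h2, ← neg_smul]
    congr 1
    field_simp
  have hkey : ⟪x - x₀, Matrix.toEuclideanLin P (fp x₀)⟫ ≤ 0 := by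
    rw [hfp0, map_smul, real_inner_smul_right]
    have : 0 ≤ lam / (1 - lam) := div_nonneg hl0 h1.le
    nlinarith [hx]
  have hsplit : (⟪x - x₀, Matrix.toEuclideanLin P (fp x)⟫ : ℝ)
      = ⟪x - x₀, Matrix.toEuclideanLin P (fp x - fp x₀)⟫
        + ⟪x - x₀, Matrix.toEuclideanLin P (fp x₀)⟫ := by
    rw [map_sub, inner_sub_right]; ring
  have hle : 2 * ⟪x - x₀, Matrix.toEuclideanLin P (fp x)⟫ ≤ -α * ‖x - x₀‖ ^ 2 := by
    have := hp x
    rw [hsplit]; nlinarith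
  refine ⟨hle, fun hne => ?_⟩
  have hpos : 0 < ‖x - x₀‖ ^ 2 := by
    exact pow_pos (norm_pos_iff.mpr (sub_ne_zero.mpr hne)) 2
  nlinarith
end

section
/- Assume x₀ is a switched equilibrium with some λ₀ ∈ [0,1), i.e. λ₀ f⁻(x₀) + (1−λ₀) f⁺(x₀) = 0. Then for every x on the switching hyperplane, i.e. ⟨x−x₀, P f⁻(x₀)⟩ = 0, and for every λ ∈ [0,1], the convex combination satisfies V′(x)(λ f⁻(x) + (1−λ) f⁺(x)) ≤ −α‖x−x₀‖²; in particular every convex combination of the two vector fields decreases V strictly at every such x ≠ x₀. -/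
open scoped RealInnerProductSpace

/-- If `x₀` is a switched equilibrium with `λ₀ ∈ [0,1)`, then for every `x` on the
switching hyperplane `⟨x-x₀, P f⁻(x₀)⟩ = 0` and every `λ ∈ [0,1]`, the convex
combination satisfies `V′(x)(λ f⁻(x) + (1-λ) f⁺(x)) ≤ -α‖x-x₀‖²`; in particular it is
strictly negative for every such `x ≠ x₀`. -/
theorem decay_estimate_convex_combination {n : ℕ} (hn : 1 ≤ n)
    (fm fp : EuclideanSpace ℝ (Fin n) → EuclideanSpace ℝ (Fin n))
    (hfm : ContDiff ℝ 1 fm) (hfp : ContDiff ℝ 1 fp)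
    (x₀ : EuclideanSpace ℝ (Fin n))
    (P : Matrix (Fin n) (Fin n) ℝ) (hP : P.IsSymm)
    (α : ℝ) (hα : 0 < α)
    (hm : ∀ x, 2 * ⟪x - x₀, Matrix.toEuclideanLin P (fm x - fm x₀)⟫ ≤ -α * ‖x - x₀‖ ^ 2)
    (hp : ∀ x, 2 * ⟪x - x₀, Matrix.toEuclideanLin P (fp x - fp x₀)⟫ ≤ -α * ‖x - x₀‖ ^ 2)
    (lam : ℝ) (hlam : lam ∈ Set.Ico (0 : ℝ) 1)
    (heq : lam • fm x₀ + (1 - lam) • fp x₀ = 0) :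
    ∀ x, ⟪x - x₀, Matrix.toEuclideanLin P (fm x₀)⟫ = 0 →
      ∀ μ ∈ Set.Icc (0 : ℝ) 1,
        2 * ⟪x - x₀, Matrix.toEuclideanLin P (μ • fm x + (1 - μ) • fp x)⟫
          ≤ -α * ‖x - x₀‖ ^ 2 ∧
        (x ≠ x₀ →
          2 * ⟪x - x₀, Matrix.toEuclideanLin P (μ • fm x + (1 - μ) • fp x)⟫ < 0) := by
  intro x hx μ hμ
  obtain ⟨hlam0, hlam1⟩ := hlam
  obtain ⟨hμ0, hμ1⟩ := hμ
  -- fp x₀ is a nonpositive multiple of fm x₀, so also on the hyperplane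
  have h1lam : (1 : ℝ) - lam ≠ 0 := by linarith
  have hfpx0 : fp x₀ = (-(lam / (1 - lam))) • fm x₀ := by
    have h2 : (1 - lam) • fp x₀ = -(lam • fm x₀) := by
      rw [eq_neg_iff_add_eq_zero, add_comm]; exact heq
    have h3 := congrArg (fun v => ((1 - lam)⁻¹) • v) h2
    simp only [smul_smul, inv_mul_cancel₀ h1lam, one_smul, smul_neg] at h3
    rw [h3, ← neg_smul]
    congr 1
    field_simp
  have hxp : ⟪x - x₀, Matrix.toEuclideanLin P (fp x₀)⟫ = 0 := by
    rw [hfpx0, map_smul, inner_smul_right, hx, mul_zero]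
  -- rewrite the combination
  have key : 2 * ⟪x - x₀, Matrix.toEuclideanLin P (μ • fm x + (1 - μ) • fp x)⟫
      = μ * (2 * ⟪x - x₀, Matrix.toEuclideanLin P (fm x - fm x₀)⟫)
        + (1 - μ) * (2 * ⟪x - x₀, Matrix.toEuclideanLin P (fp x - fp x₀)⟫) := by
    simp only [map_add, map_smul, map_sub, inner_add_right, inner_smul_right,
      inner_sub_right]
    rw [hx, hxp] at *
    ring
  have hle : 2 * ⟪x - x₀, Matrix.toEuclideanLin P (μ • fm x + (1 - μ) • fp x)⟫
      ≤ -α * ‖x - x₀‖ ^ 2 := by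
    rw [key]
    have h1 := mul_le_mul_of_nonneg_left (hm x) hμ0
    have h2 := mul_le_mul_of_nonneg_left (hp x) (by linarith : (0:ℝ) ≤ 1 - μ)
    nlinarith
  refine ⟨hle, fun hne => ?_⟩
  have hnorm : 0 < ‖x - x₀‖ := by
    rw [norm_pos_iff]
    exact sub_ne_zero.mpr hne
  calc 2 * ⟪x - x₀, Matrix.toEuclideanLin P (μ • fm x + (1 - μ) • fp x)⟫
      ≤ -α * ‖x - x₀‖ ^ 2 := hle
    _ < 0 := by
        have := mul_pos hα (pow_pos hnorm 2)
        linarith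
end

section
/- (Lyapunov convergence along trajectories.) Let x : [0,∞) → ℝⁿ be a curve such that the function v(t) = V(x(t)) is differentiable on [0,∞) with v′(t) ≤ −w(x(t)) for all t ≥ 0. Then x(t) → x₀ as t → ∞. -/
/-- Lyapunov convergence along trajectories: if `v(t) = V(x(t))` is differentiable on
`[0,∞)` with `v′(t) ≤ -w(x(t))`, then `x(t) → x₀` as `t → ∞`. -/
theorem lyapunov_trajectory_convergence {n : ℕ} (hn : 1 ≤ n)
    (x₀ : EuclideanSpace ℝ (Fin n))
    (V : EuclideanSpace ℝ (Fin n) → ℝ) (hVc : Continuous V)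
    (hV₀ : V x₀ = 0) (hVpos : ∀ x, x ≠ x₀ → 0 < V x)
    (hVinf : ∀ δ > (0 : ℝ), ∃ m > (0 : ℝ), ∀ x, δ ≤ ‖x - x₀‖ → m ≤ V x)
    (w : EuclideanSpace ℝ (Fin n) → ℝ) (hw : ∀ x, 0 ≤ w x)
    (hwpos : ∀ ρ > (0 : ℝ), ∃ ε > (0 : ℝ), ∀ x, ρ ≤ ‖x - x₀‖ → ε ≤ w x)
    (X : ℝ → EuclideanSpace ℝ (Fin n)) (v' : ℝ → ℝ)
    (hdiff : ∀ t ∈ Set.Ici (0 : ℝ),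
      HasDerivWithinAt (fun s => V (X s)) (v' t) (Set.Ici (0 : ℝ)) t)
    (hdec : ∀ t ∈ Set.Ici (0 : ℝ), v' t ≤ -w (X t)) :
    Filter.Tendsto X Filter.atTop (nhds x₀) := by
  set v : ℝ → ℝ := fun s => V (X s) with hv
  have hvcont : ContinuousOn v (Set.Ici (0:ℝ)) := fun t ht =>
    (hdiff t ht).continuousWithinAt
  have hVnonneg : ∀ y, 0 ≤ V y := by
    intro y
    by_cases h : y = x₀
    · simp [h, hV₀]
    · exact (hVpos y h).le
  have hderiv : ∀ t ∈ interior (Set.Ici (0:ℝ)), HasDerivAt v (v' t) t := by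
    intro t ht
    rw [interior_Ici] at ht
    exact (hdiff t (Set.mem_Ici.mpr (le_of_lt (Set.mem_Ioi.mp ht)))).hasDerivAt (Ici_mem_nhds ht)
  have hdiffon : DifferentiableOn ℝ v (interior (Set.Ici (0:ℝ))) := fun t ht =>
    ((hderiv t ht).differentiableAt).differentiableWithinAt
  have hderiveq : ∀ t ∈ interior (Set.Ici (0:ℝ)), deriv v t = v' t := fun t ht =>
    (hderiv t ht).deriv
  have hanti : AntitoneOn v (Set.Ici (0:ℝ)) := by
    apply antitoneOn_of_deriv_nonpos (convex_Ici (0:ℝ)) hvcont hdiffon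
    intro t ht
    rw [hderiveq t ht]
    exact (hdec t (interior_subset ht)).trans (neg_nonpos.mpr (hw _))
  have claimA : ∀ m > (0:ℝ), ∃ T ≥ (0:ℝ), v T < m := by
    intro m hm
    by_contra h
    push_neg at h
    obtain ⟨δ, hδ, hδ'⟩ := Metric.continuousAt_iff.mp (hVc.continuousAt (x := x₀)) m hm
    have hfar : ∀ t : ℝ, 0 ≤ t → δ ≤ ‖X t - x₀‖ := by
      intro t ht
      by_contra hc
      push_neg at hc
      have h1 : dist (V (X t)) (V x₀) < m := hδ' (by rwa [dist_eq_norm])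
      rw [hV₀, dist_zero_right, Real.norm_of_nonneg (hVnonneg _)] at h1
      exact absurd h1 (not_lt.mpr (h t ht))
    obtain ⟨ε, hε, hε'⟩ := hwpos δ hδ
    have hd' : ∀ t ∈ interior (Set.Ici (0:ℝ)), deriv v t ≤ -ε := by
      intro t ht
      rw [hderiveq t ht]
      have ht0 : (0:ℝ) ≤ t := interior_subset ht
      have := hε' (X t) (hfar t ht0)
      linarith [hdec t ht0]
    set T : ℝ := v 0 / ε + 1 with hT
    have hT0 : (0:ℝ) ≤ T := by
      have := div_nonneg (hVnonneg (X 0)) hε.le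
      simp only [hT]; linarith
    have hb := (convex_Ici (0:ℝ)).image_sub_le_mul_sub_of_deriv_le hvcont hdiffon hd'
      0 Set.self_mem_Ici T hT0 hT0
    have hv0 : 0 ≤ v 0 := hVnonneg (X 0)
    have hvT : 0 ≤ v T := hVnonneg (X T)
    have : v T - v 0 ≤ -ε * T := by simpa using hb
    have hεT : ε * T = v 0 + ε := by
      rw [hT, mul_add, mul_one, mul_div_assoc', mul_comm ε (v 0), mul_div_assoc, div_self hε.ne', mul_one]
    nlinarith
  rw [Metric.tendsto_atTop]
  intro ρ hρ
  obtain ⟨m, hm, hm'⟩ := hVinf ρ hρ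
  obtain ⟨T, hT0, hTm⟩ := claimA m hm
  refine ⟨T, fun t ht => ?_⟩
  have htt : (0:ℝ) ≤ t := hT0.trans ht
  have hvt : v t < m := lt_of_le_of_lt (hanti hT0 htt ht) hTm
  by_contra hc
  push_neg at hc
  rw [dist_eq_norm] at hc
  exact absurd hvt (not_lt.mpr (hm' (X t) hc))
end

section
/- (Lyapunov value decay along trajectories.) Let x : [0,∞) → ℝⁿ be a curve such that the function v(t) = V(x(t)) is differentiable on [0,∞) with v′(t) ≤ −w(x(t)) for all t ≥ 0. Then V(x(t)) → 0 as t → ∞. -/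
/-- Lyapunov value decay along trajectories: if `v(t) = V(x(t))` is differentiable on
`[0,∞)` with `v′(t) ≤ -w(x(t))`, then `V(x(t)) → 0` as `t → ∞`. -/
theorem lyapunov_value_decay {n : ℕ} (hn : 1 ≤ n)
    (x₀ : EuclideanSpace ℝ (Fin n))
    (V : EuclideanSpace ℝ (Fin n) → ℝ) (hVc : Continuous V)
    (hV₀ : V x₀ = 0) (hVpos : ∀ x, x ≠ x₀ → 0 < V x)
    (w : EuclideanSpace ℝ (Fin n) → ℝ) (hw : ∀ x, 0 ≤ w x)
    (hwpos : ∀ ρ > (0 : ℝ), ∃ ε > (0 : ℝ), ∀ x, ρ ≤ ‖x - x₀‖ → ε ≤ w x)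
    (X : ℝ → EuclideanSpace ℝ (Fin n)) (v' : ℝ → ℝ)
    (hdiff : ∀ t ∈ Set.Ici (0 : ℝ),
      HasDerivWithinAt (fun s => V (X s)) (v' t) (Set.Ici (0 : ℝ)) t)
    (hdec : ∀ t ∈ Set.Ici (0 : ℝ), v' t ≤ -w (X t)) :
    Filter.Tendsto (fun t => V (X t)) Filter.atTop (nhds 0) := by
  set v : ℝ → ℝ := fun t => V (X t) with hv
  have hVnn : ∀ x, 0 ≤ V x := by
    intro x
    by_cases hx : x = x₀
    · simp [hx, hV₀]
    · exact (hVpos x hx).le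
  have hvnn : ∀ t, 0 ≤ v t := fun t => hVnn _
  have hIciInt : interior (Set.Ici (0:ℝ)) = Set.Ioi 0 := interior_Ici
  -- v is antitone on Ici 0
  have hanti : AntitoneOn v (Set.Ici (0:ℝ)) := by
    apply antitoneOn_of_hasDerivWithinAt_nonpos (convex_Ici 0)
      (f' := v')
    · exact fun t ht => (hdiff t ht).continuousWithinAt
    · intro t ht
      rw [hIciInt] at ht ⊢
      exact (hdiff t (Set.mem_Ici.mpr (le_of_lt (Set.mem_Ioi.mp ht)))).mono Set.Ioi_subset_Ici_self
    · intro t ht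
      rw [hIciInt] at ht
      exact (hdec t (Set.mem_Ici.mpr (le_of_lt (Set.mem_Ioi.mp ht)))).trans (neg_nonpos.mpr (hw _))
  -- main step: for every δ > 0, eventually v t < δ
  rw [Metric.tendsto_atTop]
  intro δ hδ
  -- it suffices to find one T ≥ 0 with v T < δ
  suffices h : ∃ T : ℝ, 0 ≤ T ∧ v T < δ by
    obtain ⟨T, hT0, hTδ⟩ := h
    refine ⟨T, fun t ht => ?_⟩
    have h1 : v t ≤ v T := hanti hT0 (hT0.trans ht) ht
    rw [Real.dist_eq, abs_sub_lt_iff]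
    constructor
    · linarith
    · linarith [hvnn t]
  by_contra hcon
  push_neg at hcon
  -- so δ ≤ v t for all t ≥ 0
  have hvδ : ∀ t, 0 ≤ t → δ ≤ v t := fun t ht => hcon t ht
  -- continuity of V at x₀ gives ρ
  obtain ⟨ρ, hρ, hball⟩ := Metric.continuousAt_iff.mp hVc.continuousAt δ hδ
  have hfar : ∀ t, 0 ≤ t → ρ ≤ ‖X t - x₀‖ := by
    intro t ht
    by_contra h
    push_neg at h
    have hlt := hball (x := X t) (by rwa [dist_eq_norm])
    rw [hV₀, Real.dist_eq, sub_zero] at hlt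
    exact absurd (lt_of_abs_lt hlt) (not_lt.mpr (hvδ t ht))
  obtain ⟨ε, hε, hεw⟩ := hwpos ρ hρ
  -- then v' t ≤ -ε on Ici 0
  have hder : ∀ t ∈ Set.Ici (0:ℝ), v' t ≤ -ε := by
    intro t ht
    have := hεw (X t) (hfar t ht)
    linarith [hdec t ht]
  -- g t = v t + ε t is antitone on Ici 0
  have hganti : AntitoneOn (fun t => v t + ε * t) (Set.Ici (0:ℝ)) := by
    apply antitoneOn_of_hasDerivWithinAt_nonpos (convex_Ici 0)
      (f' := fun t => v' t + ε)
    · intro t ht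
      exact ((hdiff t ht).add ((hasDerivWithinAt_id t _).const_mul ε)).continuousWithinAt
        |>.congr (fun s _ => by simp) (by simp)
    · intro t ht
      rw [hIciInt] at ht ⊢
      have := ((hdiff t (Set.mem_Ici.mpr (le_of_lt (Set.mem_Ioi.mp ht)))).add
        ((hasDerivWithinAt_id t (Set.Ici (0:ℝ))).const_mul ε)).mono Set.Ioi_subset_Ici_self
      simp only [mul_one] at this; exact this
    · intro t ht
      rw [hIciInt] at ht
      have := hder t (Set.mem_Ici.mpr (le_of_lt (Set.mem_Ioi.mp ht)))
      linarith
  -- contradiction at large t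
  set T : ℝ := (v 0 + 1) / ε with hT
  have hT0 : 0 ≤ T := div_nonneg (by linarith [hvnn 0]) hε.le
  have := hganti (Set.self_mem_Ici) hT0 hT0
  have hvT : 0 ≤ v T := hvnn T
  have hεT : ε * T = v 0 + 1 := by
    rw [hT]; field_simp [hε.ne']
  simp only [mul_zero, add_zero] at this
  rw [hεT] at this
  linarith
end

section
/- For the boost-converter subsystems, the quadratic function V is a common Lyapunov function: for each σ ∈ {0,1} and every x ∈ ℝ², ∇V(x) · (A^σ (x − x₀)) = −(r_L/(x_C x_L)) (x₁−x₀₁)² − (1/(x_C x_L (r₀+r_C))) (x₂−x₀₂)², and hence ∇V(x) · (A^σ (x − x₀)) ≤ −α‖x − x₀‖² with α = min( r_L/(x_C x_L), 1/(x_C x_L (r₀+r_C)) ) > 0. -/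
open Matrix

/-- For the boost-converter subsystem matrices `A^σ`, `σ ∈ {0,1}`, the quadratic
`V(x) = (x₁-x₀₁)²/(2x_C) + (x₂-x₀₂)²/(2x_L)` is a common Lyapunov function:
`∇V(x) ⬝ A^σ(x-x₀) = -(r_L/(x_C x_L))(x₁-x₀₁)² - (1/(x_C x_L (r₀+r_C)))(x₂-x₀₂)²`,
hence `∇V(x) ⬝ A^σ(x-x₀) ≤ -α‖x-x₀‖²` with
`α = min (r_L/(x_C x_L)) (1/(x_C x_L (r₀+r_C))) > 0`. -/
theorem boost_converter_common_lyapunov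
    (rL rC xL xC r0 : ℝ) (hrL : 0 < rL) (hrC : 0 < rC) (hxL : 0 < xL)
    (hxC : 0 < xC) (hr0 : 0 < r0)
    (x₀ : EuclideanSpace ℝ (Fin 2)) :
    0 < min (rL / (xC * xL)) (1 / (xC * xL * (r0 + rC))) ∧
    ∀ σ : ℝ, (σ = 0 ∨ σ = 1) → ∀ x : EuclideanSpace ℝ (Fin 2),
      ![(x 0 - x₀ 0) / xC, (x 1 - x₀ 1) / xL] ⬝ᵥ
          (!![-(rL / xL), -(r0 * σ) / (xL * (r0 + rC));
              (r0 * σ) / (xC * (r0 + rC)), -(1 / (xC * (r0 + rC)))]).mulVec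
            ![x 0 - x₀ 0, x 1 - x₀ 1]
        = -(rL / (xC * xL)) * (x 0 - x₀ 0) ^ 2
            - (1 / (xC * xL * (r0 + rC))) * (x 1 - x₀ 1) ^ 2 ∧
      ![(x 0 - x₀ 0) / xC, (x 1 - x₀ 1) / xL] ⬝ᵥ
          (!![-(rL / xL), -(r0 * σ) / (xL * (r0 + rC));
              (r0 * σ) / (xC * (r0 + rC)), -(1 / (xC * (r0 + rC)))]).mulVec
            ![x 0 - x₀ 0, x 1 - x₀ 1]
        ≤ -(min (rL / (xC * xL)) (1 / (xC * xL * (r0 + rC)))) * ‖x - x₀‖ ^ 2 := by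
  have hsum : (0:ℝ) < r0 + rC := by linarith
  have hα : 0 < min (rL / (xC * xL)) (1 / (xC * xL * (r0 + rC))) :=
    lt_min (div_pos hrL (mul_pos hxC hxL))
      (div_pos one_pos (mul_pos (mul_pos hxC hxL) hsum))
  refine ⟨hα, fun σ hσ x => ?_⟩
  have key : ![(x 0 - x₀ 0) / xC, (x 1 - x₀ 1) / xL] ⬝ᵥ
          (!![-(rL / xL), -(r0 * σ) / (xL * (r0 + rC));
              (r0 * σ) / (xC * (r0 + rC)), -(1 / (xC * (r0 + rC)))]).mulVec
            ![x 0 - x₀ 0, x 1 - x₀ 1]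
        = -(rL / (xC * xL)) * (x 0 - x₀ 0) ^ 2
            - (1 / (xC * xL * (r0 + rC))) * (x 1 - x₀ 1) ^ 2 := by
    simp only [dotProduct, Matrix.mulVec, Fin.sum_univ_two, Matrix.cons_val_zero,
      Matrix.cons_val_one, Matrix.head_cons, Matrix.of_apply, Matrix.cons_val',
      Matrix.head_fin_const, Matrix.empty_val', Matrix.cons_val_fin_one]
    field_simp
    ring
  refine ⟨key, ?_⟩
  rw [key]
  have hnorm : ‖x - x₀‖ ^ 2 = (x 0 - x₀ 0) ^ 2 + (x 1 - x₀ 1) ^ 2 := by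
    rw [EuclideanSpace.norm_eq]
    rw [Real.sq_sqrt (by positivity)]
    simp [Fin.sum_univ_two, sq_abs]
  rw [hnorm]
  have h1 := min_le_left (rL / (xC * xL)) (1 / (xC * xL * (r0 + rC)))
  have h2 := min_le_right (rL / (xC * xL)) (1 / (xC * xL * (r0 + rC)))
  nlinarith [sq_nonneg (x 0 - x₀ 0), sq_nonneg (x 1 - x₀ 1)]
end
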